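/- Let a > 0, c > 0, λ ≥ 0, let h : ℝ → ℝ be continuous and bounded, and let I : ℝ → ℝ be continuous, bounded, and nonnegative. Define G₁(t) = ∫_{τ ∈ (-∞, t]} h(τ) · exp(-c·∫_τ^t I(s) ds) · exp(-λ(t-τ)) · g_a^1(t - τ) dτ. Then for every t ∈ ℝ, G₁ is differentiable at t with G₁'(t) = a·h(t) - (c·I(t) + λ + a)·G₁(t). -/

import Mathlib

/-!
With `Φ u = (λ + a) u + c ∫₀ᵘ I`, the Erlang kernel `g_a^1(x) = a e^{-a x}` turns the integrand
into `a e^{-Φ t} · h τ e^{Φ τ}`, so `G₁ t = a e^{-Φ t} ∫_{-∞}^t h e^Φ`, and the product rule gives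
the linear equation. Since `I ≥ 0`, `Φ τ ≤ (λ + a) τ + c ∫₀ᵗ I` for `τ ≤ t`, which makes the
improper integral converge.
-/

open Real MeasureTheory Set

/-- Erlang density with shape parameter `i` and rate parameter `a`. -/
noncomputable def erlang (a : ℝ) (i : ℕ) (t : ℝ) : ℝ :=
  a ^ i * t ^ (i - 1) * Real.exp (-a * t) / (Nat.factorial (i - 1))

lemma erlang_one (a t : ℝ) : erlang a 1 t = a * exp (-a * t) := by
  simp [erlang]

lemma integrableOn_Iic_mul_exp_mul_add {f ψ : ℝ → ℝ} {b M : ℝ} (hb : 0 < b)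
    (hf : Continuous f) (hfM : ∀ τ, |f τ| ≤ M) (hψ : Monotone ψ) (t : ℝ) :
    IntegrableOn (fun τ => f τ * exp (b * τ + ψ τ)) (Iic t) := by
  have hmeas : AEStronglyMeasurable (fun τ => f τ * exp (b * τ + ψ τ)) (volume.restrict (Iic t)) :=
    (hf.measurable.mul (measurable_exp.comp
      ((measurable_const.mul measurable_id).add hψ.measurable))).aestronglyMeasurable
  refine Integrable.mono' ((integrableOn_exp_mul_Iic hb t).const_mul (M * exp (ψ t))) hmeas ?_
  refine (ae_restrict_iff' measurableSet_Iic).2 (Filter.Eventually.of_forall fun τ hτ => ?_)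
  have hψτ : ψ τ ≤ ψ t := hψ hτ
  have hM : 0 ≤ M := (abs_nonneg _).trans (hfM τ)
  calc ‖f τ * exp (b * τ + ψ τ)‖ = |f τ| * exp (b * τ + ψ τ) := by
        rw [norm_mul, norm_eq_abs, norm_of_nonneg (exp_pos _).le]
    _ ≤ M * exp (b * τ + ψ t) := by gcongr; exact hfM τ
    _ = M * exp (ψ t) * exp (b * τ) := by rw [exp_add]; ring

lemma hasDerivAt_integral_Iic {E : Type*} [NormedAddCommGroup E] [NormedSpace ℝ E]
    [CompleteSpace E] {f : ℝ → E} (hf : Continuous f) (hint : ∀ u, IntegrableOn f (Iic u))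
    (t : ℝ) : HasDerivAt (fun u => ∫ τ in Iic u, f τ) (f t) t := by
  have hsplit : (fun u => ∫ τ in Iic u, f τ) = fun u => (∫ τ in Iic 0, f τ) + ∫ τ in 0..u, f τ := by
    funext u
    rw [← intervalIntegral.integral_Iic_sub_Iic (hint 0) (hint u), add_sub_cancel]
  rw [hsplit]
  exact (hf.integral_hasStrictDerivAt 0 t).hasDerivAt.const_add _

lemma hasDerivAt_exp_neg_mul_integral_Iic {Φ φ f : ℝ → ℝ} (hΦ : ∀ u, HasDerivAt Φ (φ u) u)
    (hf : Continuous f) (hint : ∀ u, IntegrableOn (fun τ => f τ * exp (Φ τ)) (Iic u)) (t : ℝ) :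
    HasDerivAt (fun u => exp (-Φ u) * ∫ τ in Iic u, f τ * exp (Φ τ))
      (f t - φ t * (exp (-Φ t) * ∫ τ in Iic t, f τ * exp (Φ τ))) t := by
  have hΦcont : Continuous Φ := continuous_iff_continuousAt.2 fun u => (hΦ u).continuousAt
  have hJ := hasDerivAt_integral_Iic (f := fun τ => f τ * exp (Φ τ))
    (hf.mul (continuous_exp.comp hΦcont)) hint t
  refine ((hΦ t).neg.exp.mul hJ).congr_deriv ?_
  rw [Pi.neg_apply, exp_neg]
  field_simp
  ring

theorem linear_chain_infection_base_general (a c lam : ℝ) (ha : 0 < a) (hc : 0 < c) (hlam : 0 ≤ lam)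
    (h I : ℝ → ℝ)
    (hcont : Continuous h) (hbdd : ∃ M : ℝ, ∀ t : ℝ, |h t| ≤ M)
    (hIcont : Continuous I)
    (hIpos : ∀ t : ℝ, 0 ≤ I t)
    (G₁ : ℝ → ℝ)
    (hG₁ : ∀ t : ℝ, G₁ t = ∫ τ in Set.Iic t,
      h τ * Real.exp (-c * ∫ s in τ..t, I s) * Real.exp (-lam * (t - τ)) * erlang a 1 (t - τ)) :
    ∀ t : ℝ, HasDerivAt G₁ (a * h t - (c * I t + lam + a) * G₁ t) t := by
  obtain ⟨M, hM⟩ := hbdd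
  set K : ℝ → ℝ := fun u => ∫ s in (0 : ℝ)..u, I s
  have hK : ∀ u, HasDerivAt K (I u) u := fun u =>
    (hIcont.integral_hasStrictDerivAt 0 u).hasDerivAt
  have hKmono : Monotone K :=
    monotone_of_deriv_nonneg (fun u => (hK u).differentiableAt) fun u => (hK u).deriv ▸ hIpos u
  set Φ : ℝ → ℝ := fun u => (lam + a) * u + c * K u
  have hΦ : ∀ u, HasDerivAt Φ (lam + a + c * I u) u := fun u =>
    (((hasDerivAt_id u).const_mul (lam + a)).add ((hK u).const_mul c)).congr_deriv (by simp)
  have hint : ∀ u, IntegrableOn (fun τ => h τ * exp (Φ τ)) (Iic u) :=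
    integrableOn_Iic_mul_exp_mul_add (by linarith) hcont hM (hKmono.const_mul hc.le)
  have hG : G₁ = fun u => a * (exp (-Φ u) * ∫ τ in Iic u, h τ * exp (Φ τ)) := by
    funext u
    rw [hG₁, ← integral_const_mul, ← integral_const_mul]
    congr 1 with τ
    rw [← intervalIntegral.integral_interval_sub_left (hIcont.intervalIntegrable 0 u)
      (hIcont.intervalIntegrable 0 τ), erlang_one]
    calc _ = a * h τ * (exp (-c * (K u - K τ)) * exp (-lam * (u - τ)) * exp (-a * (u - τ))) := by
          ring
      _ = a * h τ * (exp (-Φ u) * exp (Φ τ)) := by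
          simp only [← exp_add, Φ]
          ring_nf
      _ = _ := by ring
  intro t
  rw [hG]
  exact ((hasDerivAt_exp_neg_mul_integral_Iic hΦ hcont hint t).const_mul a).congr_deriv (by ring)

theorem linear_chain_infection_base (a c lam : ℝ) (ha : 0 < a) (hc : 0 < c) (hlam : 0 ≤ lam)
    (h I : ℝ → ℝ)
    (hcont : Continuous h) (hbdd : ∃ M : ℝ, ∀ t : ℝ, |h t| ≤ M)
    (hIcont : Continuous I) (hIbdd : ∃ M : ℝ, ∀ t : ℝ, |I t| ≤ M)
    (hIpos : ∀ t : ℝ, 0 ≤ I t)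
    (G₁ : ℝ → ℝ)
    (hG₁ : ∀ t : ℝ, G₁ t = ∫ τ in Set.Iic t,
      h τ * Real.exp (-c * ∫ s in τ..t, I s) * Real.exp (-lam * (t - τ)) * erlang a 1 (t - τ)) :
    ∀ t : ℝ, HasDerivAt G₁ (a * h t - (c * I t + lam + a) * G₁ t) t :=
  linear_chain_infection_base_general a c lam ha hc hlam h I hcont hbdd hIcont hIpos G₁ hG₁
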